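/- arXiv:cs/0101030 — 4 statements merged into one kernel-verified Lean document; each statement's English description precedes it below -/
import Mathlib

section
/- Let p ≥ 1 and n ≥ p + 1 be integers, and let n'₁, …, n'_{p+1} be positive integers with n'₁ + ⋯ + n'_{p+1} = n. Then Σ_{i=1}^{p+1} n'_i·log₂ n'_i ≤ (n − p)·log₂(n − p); that is, the sum is maximized when one of the n'_i equals n − p and all others equal 1. -/
/-!
The function `x ↦ x log₂ x` is convex, so replacing two values `a, b ≥ 1` by `1` and `a + b - 1`
(which majorize them) does not decrease the sum, and `1 · log₂ 1 = 0`. Merging the values one by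
one into a single term leaves `p` ones and `n - p`.
-/

open Finset Set

section
variable {𝕜 : Type*} [Field 𝕜] [LinearOrder 𝕜] [IsStrictOrderedRing 𝕜] {s : Set 𝕜} {f : 𝕜 → 𝕜}

theorem ConvexOn.map_add_map_le {c a b : 𝕜} (hf : ConvexOn 𝕜 s f) (hc : c ∈ s)
    (hs : a + b - c ∈ s) (hca : c ≤ a) (hcb : c ≤ b) :
    f a + f b ≤ f c + f (a + b - c) := by
  rcases hca.eq_or_lt with rfl | hca
  · simp
  rcases hcb.eq_or_lt with rfl | hcb
  · rw [add_sub_cancel_right, add_comm]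
  -- `a` and `b` lie on the chord from `c` to `a + b - c`, with weights that add up across the two
  have ha := hf.secant_mono_aux1 hc hs hca (by linarith)
  have hb := hf.secant_mono_aux1 hc hs hcb (by linarith)
  have hpos : 0 < a + b - c - c := by linarith
  nlinarith

theorem ConvexOn.sum_map_le {ι : Type*} {c : 𝕜} {t : Finset ι} {g : ι → 𝕜}
    (hf : ConvexOn 𝕜 (Ici c) f) (ht : t.Nonempty) (hg : ∀ i ∈ t, c ≤ g i) :
    ∑ i ∈ t, f (g i) ≤ (#t - 1 : 𝕜) * f c + f (∑ i ∈ t, g i - (#t - 1 : 𝕜) * c) := by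
  induction ht using Nonempty.cons_induction with
  | singleton a => simp
  | cons a t hat ht ih =>
    rw [forall_mem_cons] at hg
    have hsum : #t * c ≤ ∑ i ∈ t, g i := by
      simpa using card_nsmul_le_sum t g c hg.2
    have hrest : c ≤ ∑ i ∈ t, g i - (#t - 1 : 𝕜) * c := by linarith
    have key := hf.map_add_map_le (le_refl c)
      (by rw [Set.mem_Ici]; linarith) hg.1 hrest
    rw [sum_cons, sum_cons, card_cons]
    push_cast
    calc f (g a) + ∑ i ∈ t, f (g i)
        ≤ f (g a) + ((#t - 1 : 𝕜) * f c + f (∑ i ∈ t, g i - (#t - 1 : 𝕜) * c)) := by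
          gcongr; exact ih hg.2
      _ ≤ _ := by
          convert add_le_add_left key ((#t - 1 : 𝕜) * f c) using 1 <;> ring_nf
end

theorem Real.convexOn_mul_logb {b : ℝ} (hb : 1 ≤ b) :
    ConvexOn ℝ (Ici 0) fun x ↦ x * Real.logb b x := by
  have h : (fun x ↦ x * Real.logb b x) = (Real.log b)⁻¹ • fun x ↦ x * Real.log x := by
    ext x; simp only [Real.logb, Pi.smul_apply, smul_eq_mul]; ring
  exact h ▸ Real.convexOn_mul_log.smul (inv_nonneg.2 (Real.log_nonneg hb))

open Finset in
theorem sum_mul_logb_le_general (p n : ℕ)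
    (f : Fin (p + 1) → ℕ) (hf : ∀ i, 1 ≤ f i) (hsum : ∑ i, f i = n) :
    ∑ i, (f i : ℝ) * Real.logb 2 (f i) ≤ ((n : ℝ) - p) * Real.logb 2 ((n : ℝ) - p) := by
  have hsum' : ∑ i, (f i : ℝ) = n := by exact_mod_cast hsum
  have hconv : ConvexOn ℝ (Set.Ici 1) fun x ↦ x * Real.logb 2 x :=
    (Real.convexOn_mul_logb one_le_two).subset (Set.Ici_subset_Ici.2 zero_le_one) (convex_Ici 1)
  have h := hconv.sum_map_le univ_nonempty (g := fun i ↦ (f i : ℝ)) fun i _ ↦ by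
    exact_mod_cast hf i
  simpa [hsum'] using h

open Finset in
/-- Let `p ≥ 1` and `n ≥ p + 1` be integers, and let `n'₁, …, n'_{p+1}` be
positive integers with `n'₁ + ⋯ + n'_{p+1} = n`.  Then
`Σ_{i=1}^{p+1} n'_i·log₂ n'_i ≤ (n − p)·log₂(n − p)`. -/
theorem sum_mul_logb_le (p n : ℕ) (hp : 1 ≤ p) (hn : p + 1 ≤ n)
    (f : Fin (p + 1) → ℕ) (hf : ∀ i, 1 ≤ f i) (hsum : ∑ i, f i = n) :
    ∑ i, (f i : ℝ) * Real.logb 2 (f i) ≤ ((n : ℝ) - p) * Real.logb 2 ((n : ℝ) - p) :=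
  sum_mul_logb_le_general p n f hf hsum
end

section
/- Let S1 and S2 be evolutionary trees and let u be an internal vertex of S1 and v an internal vertex of S2. Then rr(S1^u, S2^v) = max{ mm(K(u,S1), K(v,S2)), mm(u, K(v,S2)), mm(K(u,S1), v) }. -/
/-- A leaf-labeled rooted tree: either a labeled leaf, or an internal
vertex with a list of subtrees. -/
inductive ETree (L : Type) : Type where
  | leaf : L → ETree L
  | node : List (ETree L) → ETree L

namespace ETree

variable {L : Type} [DecidableEq L]

/-- The list of leaf labels of a tree. -/
def labelList : ETree L → List L
  | leaf a => [a]
  | node ts => ts.attach.flatMap fun ⟨t, _⟩ => labelList t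

/-- The label set of a tree: the set of its leaf labels. -/
def labelSet (t : ETree L) : Finset L := (labelList t).toFinset

/-- The list of children (as subtrees) of the root of a tree. -/
def children : ETree L → List (ETree L)
  | leaf _ => []
  | node ts => ts

/-- A rooted tree is homeomorphic if every internal vertex has at least two children. -/
inductive Homeo : ETree L → Prop where
  | leaf (a : L) : Homeo (leaf a)
  | node (ts : List (ETree L)) (hlen : 2 ≤ ts.length) (h : ∀ t ∈ ts, Homeo t) :
      Homeo (node ts)

/-- An evolutionary tree: a homeomorphic rooted tree whose leaves carry distinct labels. -/
def IsEvolutionary (t : ETree L) : Prop := Homeo t ∧ (labelList t).Nodup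

/-- `restrict t s` is the homeomorphic version `t‖s` of the tree obtained from `t` by
deleting all leaves with labels outside `s` (contracting away all vertices that are
not leaves or lowest common ancestors of two leaves); `none` if nothing remains. -/
def restrict : ETree L → Finset L → Option (ETree L)
  | leaf a, s => if a ∈ s then some (leaf a) else none
  | node ts, s =>
      match ts.attach.filterMap (fun ⟨t, _⟩ => restrict t s) with
      | [] => none
      | [u] => some u
      | us => some (node us)

/-- Label-preserving isomorphism of leaf-labeled rooted trees. -/
inductive Iso : ETree L → ETree L → Prop where
  | leaf (a : L) : Iso (leaf a) (leaf a)
  | node (ts us : List (ETree L)) (e : Fin ts.length ≃ Fin us.length)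
      (h : ∀ i : Fin ts.length, Iso (ts.get i) (us.get (e i))) :
      Iso (node ts) (node us)

/-- Isomorphism of possibly-empty trees. -/
def IsoO : Option (ETree L) → Option (ETree L) → Prop
  | none, none => True
  | some t, some u => Iso t u
  | _, _ => False

/-- `rr T₁ T₂`: the number of leaves in a maximum agreement subtree of `T₁` and `T₂`,
i.e. the maximum cardinality of a subset `s` of the common labels such that `T₁‖s`
and `T₂‖s` are label-preservingly isomorphic. -/
noncomputable def rr (t₁ t₂ : ETree L) : ℕ :=
  sSup {k | ∃ s : Finset L, s ⊆ labelSet t₁ ∩ labelSet t₂ ∧ s.card = k ∧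
    IsoO (restrict t₁ s) (restrict t₂ s)}

end ETree

namespace ETree

variable {L : Type} [DecidableEq L]

noncomputable instance : DecidableEq (ETree L) := Classical.decEq _

/-- `mm U V`: the maximum weight of a matching of the complete bipartite graph
`(U, V, U×V)` in which the edge `(u,v)` has weight `rr u v` (note that in our
representation a vertex of a tree is identified with the subtree it roots, so the
weight of `(u,v)` is `rr` of the two rooted subtrees). -/
noncomputable def mm (U V : Finset (ETree L)) : ℕ :=
  sSup {w | ∃ M : Finset (ETree L × ETree L),
    (∀ p ∈ M, p.1 ∈ U ∧ p.2 ∈ V) ∧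
    (∀ p ∈ M, ∀ q ∈ M, p ≠ q → p.1 ≠ q.1 ∧ p.2 ≠ q.2) ∧
    w = ∑ p ∈ M, rr p.1 p.2}

/-- `mmb U V x y`: the maximum weight of a matching of the complete bipartite graph
`(U, V, U×V)` (edge `(u,v)` weighted by `rr u v`) that does not use the edge `(x,y)`. -/
noncomputable def mmb (U V : Finset (ETree L)) (x y : ETree L) : ℕ :=
  sSup {w | ∃ M : Finset (ETree L × ETree L),
    (∀ p ∈ M, p.1 ∈ U ∧ p.2 ∈ V) ∧
    (∀ p ∈ M, ∀ q ∈ M, p ≠ q → p.1 ≠ q.1 ∧ p.2 ≠ q.2) ∧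
    (x, y) ∉ M ∧
    w = ∑ p ∈ M, rr p.1 p.2}

/-- `IsSubtree s t`: `s` occurs as a rooted subtree `t^u` of `t` (vertices of a tree
with distinct leaf labels are identified with the subtrees they root). -/
inductive IsSubtree : ETree L → ETree L → Prop where
  | refl (t : ETree L) : IsSubtree t t
  | child {s c : ETree L} {ts : List (ETree L)} (hc : c ∈ ts) (h : IsSubtree s c) :
      IsSubtree s (node ts)

end ETree

/-! An agreement set `s` of `u` and `v` restricts each of them to the forest of its surviving
children. If exactly one child `c` of `u` survives, the restriction of `u` contracts to that of
`c`, so `s` is an agreement set of `c` and `v`; symmetrically for `v`. Otherwise both roots keep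
zero or at least two children, and an isomorphism of the restricted roots pairs the surviving
children: this is a matching of `K(u)` and `K(v)` whose weights add up to at least `|s|`.
Conversely, since distinct children carry disjoint label sets, the union of optimal agreement
sets along a matching restricts every matched child to its own part, hence is an agreement set
of `u` and `v`; and an agreement set of a child of `u` with `v` is one of `u` with `v`. -/

theorem List.Perm.exists_finEquiv {α : Type*} {l₁ l₂ : List α} (h : l₁.Perm l₂) :
    ∃ e : Fin l₁.length ≃ Fin l₂.length, ∀ i, l₂.get (e i) = l₁.get i := by
  induction h with
  | nil => exact ⟨Equiv.refl _, fun i => i.elim0⟩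
  | cons a _ ih =>
    obtain ⟨e, he⟩ := ih
    refine ⟨(finSuccEquiv _).trans ((Equiv.optionCongr e).trans (finSuccEquiv _).symm),
      fun i => ?_⟩
    induction i using Fin.cases with
    | zero => simp
    | succ i => simpa using he i
  | swap x y l =>
    refine ⟨Equiv.swap 0 1, fun i => ?_⟩
    rcases i with ⟨_ | _ | k, hk⟩
    · rfl
    · rfl
    · rw [Equiv.swap_apply_of_ne_of_ne] <;> simp [Fin.ext_iff]
  | trans _ _ ih₁ ih₂ =>
    obtain ⟨e₁, he₁⟩ := ih₁
    obtain ⟨e₂, he₂⟩ := ih₂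
    exact ⟨e₁.trans e₂, fun i => (he₂ _).trans (he₁ i)⟩

theorem Multiset.rel_filterMap_of_forall {α β γ : Type*} {R : β → γ → Prop} {m : Multiset α}
    {f : α → Option β} {g : α → Option γ} (h : ∀ a ∈ m, Option.Rel R (f a) (g a)) :
    Multiset.Rel R (m.filterMap f) (m.filterMap g) := by
  induction m using Multiset.induction_on with
  | empty => exact .zero
  | cons a m ih =>
    have ih := ih fun b hb => h b (Multiset.mem_cons_of_mem hb)
    rw [Multiset.filterMap_cons, Multiset.filterMap_cons]
    match f a, g a, h a (Multiset.mem_cons_self a m) with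
    | none, none, _ => simpa using ih
    | some _, some _, .some hbc => simpa using ih.cons hbc

theorem List.coe_filterMap_eq_of_injOn {α β ι : Type*} [DecidableEq α] {l : List α}
    (hl : l.Nodup) {g : α → Option β} {M : Finset ι} {π : ι → α} (hπ : Set.InjOn π M)
    (hmem : ∀ i ∈ M, π i ∈ l) (hnone : ∀ a ∈ l, (∀ i ∈ M, π i ≠ a) → g a = none) :
    (l.filterMap g : Multiset β) = M.val.filterMap (fun i => g (π i)) := by
  have hsub : M.image π ⊆ l.toFinset := Finset.image_subset_iff.mpr fun i hi =>
    List.mem_toFinset.mpr (hmem i hi)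
  have hzero : (l.toFinset \ M.image π).val.filterMap g = 0 :=
    Multiset.eq_zero_of_forall_notMem fun b hb => by
      obtain ⟨a, ha, hab⟩ := (Multiset.mem_filterMap _ _).mp hb
      obtain ⟨hal, hai⟩ := Finset.mem_sdiff.mp ha
      rw [hnone a (List.mem_toFinset.mp hal) fun i hi hia =>
        hai (Finset.mem_image.mpr ⟨i, hi, hia⟩)] at hab
      cases hab
  have hsplit : l.toFinset.val = (M.image π).val + (l.toFinset \ M.image π).val := by
    rw [Finset.sdiff_val, add_tsub_cancel_of_le (Finset.val_le_iff.mpr hsub)]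
  rw [← Multiset.filterMap_coe, ← hl.dedup, ← List.toFinset_val, hsplit, Multiset.filterMap_add,
    hzero, add_zero, Finset.image_val_of_injOn hπ, Multiset.filterMap_map]
  rfl

namespace ETree

section Matching

variable {α β : Type*} {U U' : Finset α} {V V' : Finset β} {M : Finset (α × β)}

def IsMatching (U : Finset α) (V : Finset β) (M : Finset (α × β)) : Prop :=
  (∀ p ∈ M, p.1 ∈ U ∧ p.2 ∈ V) ∧ ∀ p ∈ M, ∀ q ∈ M, p ≠ q → p.1 ≠ q.1 ∧ p.2 ≠ q.2

theorem IsMatching.mono (hM : IsMatching U V M) (hU : U ⊆ U') (hV : V ⊆ V') :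
    IsMatching U' V' M :=
  ⟨fun p hp => ⟨hU (hM.1 p hp).1, hV (hM.1 p hp).2⟩, hM.2⟩

theorem IsMatching.insert [DecidableEq α] [DecidableEq β] (hM : IsMatching U V M) {a : α} {b : β}
    (ha : a ∉ U) (hb : b ∉ V) : IsMatching (insert a U) (insert b V) (insert (a, b) M) := by
  have hfresh : ∀ q ∈ M, a ≠ q.1 ∧ b ≠ q.2 := fun q hq =>
    ⟨fun h => ha (h ▸ (hM.1 q hq).1), fun h => hb (h ▸ (hM.1 q hq).2)⟩
  refine ⟨fun p hp => ?_, fun p hp q hq hpq => ?_⟩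
  · obtain rfl | hp := Finset.mem_insert.mp hp
    · simp
    · exact ⟨Finset.mem_insert_of_mem (hM.1 p hp).1, Finset.mem_insert_of_mem (hM.1 p hp).2⟩
  · obtain rfl | hp := Finset.mem_insert.mp hp <;> obtain rfl | hq := Finset.mem_insert.mp hq
    · exact absurd rfl hpq
    · exact hfresh q hq
    · exact (hfresh p hp).imp Ne.symm Ne.symm
    · exact hM.2 p hp q hq hpq

theorem IsMatching.injOn_fst (hM : IsMatching U V M) : Set.InjOn Prod.fst (M : Set (α × β)) :=
  fun p hp q hq h => by_contra fun hpq => (hM.2 p hp q hq hpq).1 h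

theorem IsMatching.injOn_snd (hM : IsMatching U V M) : Set.InjOn Prod.snd (M : Set (α × β)) :=
  fun p hp q hq h => by_contra fun hpq => (hM.2 p hp q hq hpq).2 h

theorem IsMatching.card_le_one_of_left {u : α} (hM : IsMatching {u} V M) : M.card ≤ 1 :=
  Finset.card_le_one.mpr fun p hp q hq => by_contra fun hpq =>
    (hM.2 p hp q hq hpq).1 <| by
      rw [Finset.mem_singleton.mp (hM.1 p hp).1, Finset.mem_singleton.mp (hM.1 q hq).1]

theorem IsMatching.card_le_one_of_right {v : β} (hM : IsMatching U {v} M) : M.card ≤ 1 :=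
  Finset.card_le_one.mpr fun p hp q hq => by_contra fun hpq =>
    (hM.2 p hp q hq hpq).2 <| by
      rw [Finset.mem_singleton.mp (hM.1 p hp).2, Finset.mem_singleton.mp (hM.1 q hq).2]

theorem exists_isMatching_of_rel [DecidableEq α] [DecidableEq β] {γ δ : Type*}
    {R : γ → δ → Prop} {f : α → Option γ} {g : β → Option δ}
    (h : Multiset.Rel R (U.val.filterMap f) (V.val.filterMap g)) :
    ∃ M, IsMatching U V M ∧ (∀ p ∈ M, Option.Rel R (f p.1) (g p.2)) ∧
      ∀ a ∈ U, f a ≠ none → ∃ p ∈ M, p.1 = a := by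
  induction U using Finset.induction_on generalizing V with
  | empty => exact ⟨∅, ⟨by simp, by simp⟩, by simp, by simp⟩
  | insert a U ha ih =>
    rw [Finset.insert_val_of_notMem ha] at h
    cases hfa : f a with
    | none =>
      rw [Multiset.filterMap_cons_none _ _ hfa] at h
      obtain ⟨M, hM, hR, hcov⟩ := ih h
      refine ⟨M, hM.mono (Finset.subset_insert a U) le_rfl, hR, fun c hc hfc => ?_⟩
      obtain rfl | hc := Finset.mem_insert.mp hc
      · exact absurd hfa hfc
      · exact hcov c hc hfc
    | some x =>
      rw [Multiset.filterMap_cons_some _ _ _ hfa] at h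
      obtain ⟨y, ys, hxy, hrel, hys⟩ := Multiset.rel_cons_left.mp h
      have hy : y ∈ V.val.filterMap g := hys ▸ Multiset.mem_cons_self y ys
      obtain ⟨b, hb, hgb⟩ : ∃ b ∈ V, g b = some y := by simpa using hy
      rw [← Multiset.cons_erase (Finset.mem_val.mpr hb), Multiset.filterMap_cons_some _ _ _ hgb,
        Multiset.cons_inj_right, ← Finset.erase_val] at hys
      obtain ⟨M, hM, hR, hcov⟩ := ih (hys ▸ hrel)
      refine ⟨insert (a, b) M, ?_, ?_, ?_⟩
      · simpa [Finset.insert_erase hb] using hM.insert ha (Finset.notMem_erase b V)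
      · intro p hp
        obtain rfl | hp := Finset.mem_insert.mp hp
        · simpa [hfa, hgb] using hxy
        · exact hR p hp
      · intro c hc hfc
        obtain rfl | hc := Finset.mem_insert.mp hc
        · exact ⟨(c, b), Finset.mem_insert_self _ _, rfl⟩
        · obtain ⟨p, hp, rfl⟩ := hcov c hc hfc
          exact ⟨p, Finset.mem_insert_of_mem hp, rfl⟩

end Matching

section Structure

variable {L : Type}

@[induction_eliminator]
theorem induction {P : ETree L → Prop} (leaf : ∀ a, P (leaf a))
    (node : ∀ ts, (∀ t ∈ ts, P t) → P (node ts)) : ∀ t, P t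
  | .leaf a => leaf a
  | .node ts => node ts fun t _ => induction leaf node t

theorem labelList_node (ts : List (ETree L)) :
    labelList (node ts) = ts.flatMap labelList := by
  rw [labelList]
  conv_rhs => rw [← List.attach_map_subtype_val ts, List.flatMap_map]

theorem Homeo.labelList_ne_nil {t : ETree L} (h : Homeo t) : labelList t ≠ [] := by
  induction h with
  | leaf a => simp [labelList]
  | node ts hlen _ ih =>
    obtain ⟨t, ht⟩ := List.exists_mem_of_length_pos (by omega : 0 < ts.length)
    rw [labelList_node]
    exact fun h => ih t ht (List.flatMap_eq_nil_iff.mp h t ht)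

theorem IsEvolutionary.of_isSubtree {t S : ETree L} (hS : IsEvolutionary S)
    (h : IsSubtree t S) : IsEvolutionary t := by
  induction h with
  | refl => exact hS
  | child hc _ ih =>
    obtain ⟨hhom, hnd⟩ := hS
    cases hhom with
    | node _ _ hts =>
      rw [labelList_node] at hnd
      exact ih ⟨hts _ hc, (List.nodup_flatMap.mp hnd).1 _ hc⟩

theorem IsEvolutionary.nodup_children {ts : List (ETree L)} (h : IsEvolutionary (node ts)) :
    ts.Nodup := by
  have := (List.nodup_flatMap.mp (labelList_node ts ▸ h.2)).2
  refine this.imp_of_mem fun {t _} ht _ hd htu => ?_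
  subst htu
  cases h.1 with
  | node _ _ hts =>
    obtain ⟨a, ha⟩ := List.exists_mem_of_ne_nil _ (hts t ht).labelList_ne_nil
    exact hd ha ha

def ofForest : List (ETree L) → Option (ETree L)
  | [] => none
  | [t] => some t
  | ts => some (node ts)

theorem Iso.refl (t : ETree L) : Iso t t := by
  induction t with
  | leaf a => exact .leaf a
  | node ts ih => exact .node ts ts (Equiv.refl _) fun i => ih _ (ts.get_mem i)

theorem Iso.trans {t u v : ETree L} (h₁ : Iso t u) (h₂ : Iso u v) : Iso t v := by
  induction h₁ generalizing v with
  | leaf => exact h₂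
  | node ts us e _ ih =>
    cases h₂ with
    | node _ ws e' h' => exact .node ts ws (e.trans e') fun i => ih i (h' (e i))

theorem iso_node_of_perm {ts us : List (ETree L)} (h : ts.Perm us) : Iso (node ts) (node us) := by
  obtain ⟨e, he⟩ := h.exists_finEquiv
  exact .node ts us e fun i => he i ▸ Iso.refl _

theorem iso_node_cons {t u : ETree L} {ts us : List (ETree L)} (h : Iso t u)
    (hs : Iso (node ts) (node us)) : Iso (node (t :: ts)) (node (u :: us)) := by
  cases hs with
  | node _ _ e hs =>
    refine .node (t :: ts) (u :: us)
      ((finSuccEquiv _).trans ((Equiv.optionCongr e).trans (finSuccEquiv _).symm)) fun i => ?_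
    induction i using Fin.cases with
    | zero => simpa using h
    | succ i => simpa using hs i

theorem iso_node_iff_rel {ts us : List (ETree L)} :
    Iso (node ts) (node us) ↔ Multiset.Rel Iso (ts : Multiset (ETree L)) us := by
  constructor
  · rintro (_ | ⟨_, _, e, h⟩)
    rw [← List.ofFn_get ts, ← List.ofFn_get us, ← Fin.univ_val_map, ← Fin.univ_val_map,
      ← Multiset.map_univ_val_equiv e, Multiset.map_map, Multiset.rel_map]
    exact Multiset.rel_refl_of_refl_on fun i _ => h i
  · induction ts generalizing us with
    | nil =>
      intro h
      obtain rfl : us = [] := by simpa using Multiset.rel_zero_left.mp h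
      exact Iso.refl _
    | cons t ts ih =>
      intro h
      rw [← Multiset.cons_coe] at h
      obtain ⟨u, us', htu, hrel, hus⟩ := Multiset.rel_cons_left.mp h
      have hu : u ∈ us := by simp [← Multiset.mem_coe, hus]
      have hus' : us' = ↑(us.erase u) := by
        rw [← Multiset.cons_erase (Multiset.mem_coe.mpr hu), Multiset.coe_erase] at hus
        exact (Multiset.cons_inj_right u).mp hus.symm
      exact (iso_node_cons htu (ih (hus' ▸ hrel))).trans
        (iso_node_of_perm (List.perm_cons_erase hu).symm)

theorem isoO_ofForest_of_rel {ts us : List (ETree L)}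
    (h : Multiset.Rel Iso (ts : Multiset (ETree L)) us) : IsoO (ofForest ts) (ofForest us) := by
  have hlen : ts.length = us.length := by simpa using Multiset.card_eq_card_of_rel h
  match ts, us, hlen with
  | [], [], _ => trivial
  | [t], [u], _ =>
    have h : Multiset.Rel Iso (t ::ₘ 0) (u ::ₘ 0) := h
    obtain ⟨_, _, htu, -, hu⟩ := Multiset.rel_cons_left.mp h
    exact ((Multiset.singleton_eq_cons_iff _).mp hu).1 ▸ htu
  | _ :: _ :: _, _ :: _ :: _, _ => exact iso_node_iff_rel.mpr h

theorem rel_of_isoO_ofForest {ts us : List (ETree L)} (hts : ts.length ≠ 1) (hus : us.length ≠ 1)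
    (h : IsoO (ofForest ts) (ofForest us)) : Multiset.Rel Iso (ts : Multiset (ETree L)) us := by
  match ts, us with
  | [], [] => exact .zero
  | [], _ :: _ :: _ | _ :: _ :: _, [] => exact h.elim
  | _ :: _ :: _, _ :: _ :: _ => exact iso_node_iff_rel.mp h
  | [_], _ | _, [_] => simp at hts hus

theorem isoO_iff_rel {o₁ o₂ : Option (ETree L)} : IsoO o₁ o₂ ↔ Option.Rel Iso o₁ o₂ := by
  match o₁, o₂ with
  | none, none => exact ⟨fun _ => .none, fun _ => trivial⟩
  | some _, some _ => exact ⟨fun h => .some h, fun (.some h) => h⟩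
  | none, some _ | some _, none => exact ⟨False.elim, nofun⟩

end Structure

variable {L : Type} [DecidableEq L]

theorem mem_labelSet_node {a : L} {ts : List (ETree L)} :
    a ∈ labelSet (node ts) ↔ ∃ t ∈ ts, a ∈ labelSet t := by
  simp [labelSet, labelList_node]

theorem labelSet_subset_node {t : ETree L} {ts : List (ETree L)} (ht : t ∈ ts) :
    labelSet t ⊆ labelSet (node ts) :=
  fun _ ha => mem_labelSet_node.mpr ⟨t, ht, ha⟩

theorem Iso.labelSet_eq {t u : ETree L} (h : Iso t u) : labelSet t = labelSet u := by
  induction h with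
  | leaf => rfl
  | node ts us e _ ih =>
    ext a
    simp only [mem_labelSet_node, List.mem_iff_get]
    constructor
    · rintro ⟨_, ⟨i, rfl⟩, ha⟩
      exact ⟨_, ⟨e i, rfl⟩, ih i ▸ ha⟩
    · rintro ⟨_, ⟨j, rfl⟩, ha⟩
      exact ⟨_, ⟨e.symm j, rfl⟩, (ih _).symm ▸ (e.apply_symm_apply j).symm ▸ ha⟩

theorem IsEvolutionary.pairwiseDisjoint_children {ts : List (ETree L)}
    (h : IsEvolutionary (node ts)) : {t | t ∈ ts}.PairwiseDisjoint labelSet := by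
  have := (List.nodup_flatMap.mp (labelList_node ts ▸ h.2)).2
  exact (this.imp fun hd => List.disjoint_toFinset_iff_disjoint.mpr hd).set_pairwise

theorem elim_ofForest_labelSet (ts : List (ETree L)) :
    (ofForest ts).elim ∅ labelSet = labelSet (node ts) := by
  match ts with
  | [] => simp [ofForest, labelSet, labelList_node]
  | [t] => simp [ofForest, labelSet, labelList_node]
  | _ :: _ :: _ => rfl

theorem restrict_node (ts : List (ETree L)) (s : Finset L) :
    restrict (node ts) s = ofForest (ts.filterMap (restrict · s)) := by
  have h : ts.attach.filterMap (fun t => restrict t.1 s) = ts.filterMap (restrict · s) := by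
    conv_rhs => rw [← List.attach_map_subtype_val ts, List.filterMap_map]
    rfl
  rw [restrict, ← h]
  rfl

theorem elim_restrict_labelSet (t : ETree L) (s : Finset L) :
    (restrict t s).elim ∅ labelSet = labelSet t ∩ s := by
  induction t with
  | leaf a => by_cases ha : a ∈ s <;> simp [restrict, labelSet, labelList, ha]
  | node ts ih =>
    rw [restrict_node, elim_ofForest_labelSet]
    ext a
    have key : ∀ t ∈ ts, a ∈ labelSet t ∩ s ↔ ∃ r, restrict t s = some r ∧ a ∈ labelSet r := by
      intro t ht
      rw [← ih t ht]
      cases restrict t s <;> simp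
    simp only [mem_labelSet_node, List.mem_filterMap, Finset.mem_inter]
    constructor
    · rintro ⟨r, ⟨t, ht, hr⟩, ha⟩
      have := Finset.mem_inter.mp ((key t ht).mpr ⟨r, hr, ha⟩)
      exact ⟨⟨t, ht, this.1⟩, this.2⟩
    · rintro ⟨⟨t, ht, hat⟩, has⟩
      obtain ⟨r, hr, ha⟩ := (key t ht).mp (Finset.mem_inter.mpr ⟨hat, has⟩)
      exact ⟨r, ⟨t, ht, hr⟩, ha⟩

theorem restrict_congr {t : ETree L} {s s' : Finset L} (h : s ∩ labelSet t = s' ∩ labelSet t) :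
    restrict t s = restrict t s' := by
  induction t with
  | leaf a =>
    have : a ∈ s ↔ a ∈ s' := by simpa [labelSet, labelList] using congrArg (a ∈ ·) h
    simp [restrict, this]
  | node ts ih =>
    rw [restrict_node, restrict_node, List.filterMap_congr fun t ht => ih t ht ?_]
    rw [← Finset.inter_eq_right.mpr (labelSet_subset_node ht), ← Finset.inter_assoc,
      ← Finset.inter_assoc, h]

theorem restrict_empty (t : ETree L) : restrict t ∅ = none := by
  induction t with
  | leaf a => simp [restrict]
  | node ts ih => simp [restrict_node, List.filterMap_eq_nil_iff.mpr ih, ofForest]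

theorem restrict_eq_none_iff {t : ETree L} {s : Finset L} :
    restrict t s = none ↔ Disjoint (labelSet t) s := by
  rw [Finset.disjoint_iff_inter_eq_empty, ← elim_restrict_labelSet]
  constructor
  · intro h
    rw [h, Option.elim_none]
  · intro h
    rw [← restrict_empty t]
    exact restrict_congr (by simp [Finset.inter_comm s, ← elim_restrict_labelSet, h])

theorem IsoO.elim_labelSet_eq {o₁ o₂ : Option (ETree L)} (h : IsoO o₁ o₂) :
    o₁.elim ∅ labelSet = o₂.elim ∅ labelSet := by
  match o₁, o₂, h with
  | none, none, _ => rfl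
  | some _, some _, h => exact Iso.labelSet_eq h

theorem restrict_node_eq_of_subset {ts : List (ETree L)} (hnd : ts.Nodup)
    (hdisj : {t | t ∈ ts}.PairwiseDisjoint labelSet) {t : ETree L} (ht : t ∈ ts) {s : Finset L}
    (hs : s ⊆ labelSet t) : restrict (node ts) s = restrict t s := by
  obtain ⟨l₁, l₂, rfl⟩ := List.append_of_mem ht
  have hnone : ∀ c ∈ l₁ ++ l₂, restrict c s = none := fun c hc => by
    have hct : c ≠ t := by
      rintro rfl
      exact (List.nodup_cons.mp (List.nodup_middle.mp hnd)).1 hc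
    have hc' : c ∈ l₁ ++ t :: l₂ := by simp only [List.mem_append, List.mem_cons] at hc ⊢; tauto
    exact restrict_eq_none_iff.mpr ((hdisj hc' ht hct).mono_right hs)
  rw [List.forall_mem_append] at hnone
  rw [restrict_node, List.filterMap_append, List.filterMap_cons,
    List.filterMap_eq_nil_iff.mpr hnone.1, List.filterMap_eq_nil_iff.mpr hnone.2]
  cases restrict t s <;> rfl

theorem exists_restrict_node_eq_of_length_eq_one {ts : List (ETree L)} {s : Finset L}
    (hs : s ⊆ labelSet (node ts)) (h : (ts.filterMap (restrict · s)).length = 1) :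
    ∃ t ∈ ts, s ⊆ labelSet t ∧ restrict (node ts) s = restrict t s := by
  obtain ⟨r, hr⟩ := List.length_eq_one_iff.mp h
  obtain ⟨l₁, t, l₂, rfl, hl₁, ht, hl₂⟩ := List.filterMap_eq_cons_iff.mp hr
  have hl₂ := List.filterMap_eq_nil_iff.mp hl₂
  refine ⟨t, by simp, fun x hx => ?_, by rw [restrict_node, hr, ht]; rfl⟩
  obtain ⟨c, hc, hxc⟩ := mem_labelSet_node.mp (hs hx)
  have hnone : c ≠ t → restrict c s = none := by
    simp only [List.mem_append, List.mem_cons] at hc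
    rcases hc with hc | rfl | hc
    · exact fun _ => hl₁ c hc
    · exact absurd rfl
    · exact fun _ => hl₂ c hc
  by_contra hxt
  exact Finset.disjoint_left.mp (restrict_eq_none_iff.mp (hnone (by rintro rfl; exact hxt hxc)))
    hxc hx

section BiUnion

variable {ι : Type*} {ts : List (ETree L)} {M : Finset ι} {π : ι → ETree L} {F : ι → Finset L}

theorem restrict_biUnion_of_mem (hdisj : {t | t ∈ ts}.PairwiseDisjoint labelSet)
    (hπ : Set.InjOn π M) (hmem : ∀ i ∈ M, π i ∈ ts) (hF : ∀ i ∈ M, F i ⊆ labelSet (π i))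
    {i : ι} (hi : i ∈ M) : restrict (π i) (M.biUnion F) = restrict (π i) (F i) := by
  refine restrict_congr (Finset.ext fun x => ?_)
  simp only [Finset.mem_inter, Finset.mem_biUnion]
  refine ⟨fun ⟨⟨j, hj, hxj⟩, hxi⟩ => ⟨?_, hxi⟩, fun ⟨hxi, hx⟩ => ⟨⟨i, hi, hxi⟩, hx⟩⟩
  rwa [← hπ hj hi (hdisj.elim_finset (hmem j hj) (hmem i hi) x (hF j hj hxj) hxi)]

theorem restrict_biUnion_eq_none (hdisj : {t | t ∈ ts}.PairwiseDisjoint labelSet)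
    (hmem : ∀ i ∈ M, π i ∈ ts) (hF : ∀ i ∈ M, F i ⊆ labelSet (π i)) {c : ETree L} (hc : c ∈ ts)
    (hcM : ∀ i ∈ M, π i ≠ c) : restrict c (M.biUnion F) = none := by
  refine restrict_eq_none_iff.mpr (Finset.disjoint_left.mpr fun x hxc hx => ?_)
  obtain ⟨i, hi, hxi⟩ := Finset.mem_biUnion.mp hx
  exact hcM i hi (hdisj.elim_finset (hmem i hi) hc x (hF i hi hxi) hxc)

end BiUnion

theorem bddAbove_rr (t₁ t₂ : ETree L) :
    BddAbove {k | ∃ s ⊆ labelSet t₁ ∩ labelSet t₂, s.card = k ∧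
      IsoO (restrict t₁ s) (restrict t₂ s)} := by
  refine ⟨(labelSet t₁).card, ?_⟩
  rintro _ ⟨s, hs, rfl, -⟩
  exact Finset.card_le_card (hs.trans Finset.inter_subset_left)

theorem exists_rr_eq (t₁ t₂ : ETree L) : ∃ s ⊆ labelSet t₁ ∩ labelSet t₂,
    s.card = rr t₁ t₂ ∧ IsoO (restrict t₁ s) (restrict t₂ s) := by
  refine Nat.sSup_mem ?_ (bddAbove_rr t₁ t₂)
  refine ⟨0, ∅, by simp, rfl, ?_⟩
  rw [restrict_empty, restrict_empty]
  trivial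

theorem le_rr {t₁ t₂ : ETree L} {s : Finset L} (hs : s ⊆ labelSet t₁ ∩ labelSet t₂)
    (hiso : IsoO (restrict t₁ s) (restrict t₂ s)) : s.card ≤ rr t₁ t₂ :=
  le_csSup (bddAbove_rr t₁ t₂) ⟨s, hs, rfl, hiso⟩

theorem rr_le {t₁ t₂ : ETree L} {n : ℕ}
    (h : ∀ s ⊆ labelSet t₁ ∩ labelSet t₂, IsoO (restrict t₁ s) (restrict t₂ s) → s.card ≤ n) :
    rr t₁ t₂ ≤ n := by
  obtain ⟨s, hs, hcard, hiso⟩ := exists_rr_eq t₁ t₂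
  exact hcard ▸ h s hs hiso

theorem rr_le_card_labelSet (t₁ t₂ : ETree L) : rr t₁ t₂ ≤ (labelSet t₁).card :=
  rr_le fun _ hs _ => Finset.card_le_card (hs.trans Finset.inter_subset_left)

theorem mm_le {U V : Finset (ETree L)} {n : ℕ}
    (h : ∀ M, IsMatching U V M → ∑ p ∈ M, rr p.1 p.2 ≤ n) : mm U V ≤ n :=
  csSup_le ⟨0, ∅, by simp, by simp, rfl⟩ fun _ ⟨M, h₁, h₂, hw⟩ => hw ▸ h M ⟨h₁, h₂⟩

theorem le_mm {U V : Finset (ETree L)} {M : Finset (ETree L × ETree L)} (hM : IsMatching U V M) :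
    ∑ p ∈ M, rr p.1 p.2 ≤ mm U V := by
  refine le_csSup ⟨∑ u ∈ U, (labelSet u).card, ?_⟩ ⟨M, hM.1, hM.2, rfl⟩
  rintro _ ⟨M, h₁, h₂, rfl⟩
  calc ∑ p ∈ M, rr p.1 p.2 ≤ ∑ p ∈ M, (labelSet p.1).card :=
        Finset.sum_le_sum fun p _ => rr_le_card_labelSet p.1 p.2
    _ = ∑ u ∈ M.image Prod.fst, (labelSet u).card :=
        (Finset.sum_image (f := fun u => (labelSet u).card) fun p hp q hq h₁₂ =>
          by_contra fun hpq => (h₂ p hp q hq hpq).1 h₁₂).symm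
    _ ≤ ∑ u ∈ U, (labelSet u).card :=
        Finset.sum_le_sum_of_subset (Finset.image_subset_iff.mpr fun p hp => (h₁ p hp).1)

theorem rr_le_mm {U V : Finset (ETree L)} {u v : ETree L} (hu : u ∈ U) (hv : v ∈ V) :
    rr u v ≤ mm U V := by
  simpa using le_mm (M := {(u, v)}) ⟨by simpa using ⟨hu, hv⟩, by simp⟩

theorem mm_le_of_card_le_one {U V : Finset (ETree L)} {n : ℕ}
    (hcard : ∀ M, IsMatching U V M → M.card ≤ 1) (h : ∀ u ∈ U, ∀ v ∈ V, rr u v ≤ n) :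
    mm U V ≤ n :=
  mm_le fun M hM => calc
    ∑ p ∈ M, rr p.1 p.2 ≤ M.card • n :=
      Finset.sum_le_card_nsmul M _ n fun p hp => h _ (hM.1 p hp).1 _ (hM.1 p hp).2
    _ ≤ n := by rw [smul_eq_mul]; exact (Nat.mul_le_mul_right n (hcard M hM)).trans_eq (one_mul n)

theorem card_inter_labelSet_le_rr {c d : ETree L} {s : Finset L}
    (h : IsoO (restrict c s) (restrict d s)) : (s ∩ labelSet c).card ≤ rr c d := by
  have hcd : ∀ x ∈ s, x ∈ labelSet c ↔ x ∈ labelSet d := fun x hx => by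
    have := h.elim_labelSet_eq
    rw [elim_restrict_labelSet, elim_restrict_labelSet] at this
    simpa [hx] using Finset.ext_iff.mp this x
  refine le_rr (fun x hx => ?_) ?_
  · rw [Finset.mem_inter] at hx ⊢
    exact ⟨hx.2, (hcd x hx.1).mp hx.2⟩
  · rwa [restrict_congr (t := c) (s' := s), restrict_congr (t := d) (s' := s)] <;>
      ext x <;> simp only [Finset.mem_inter] <;> grind

theorem card_le_mm_of_rel {us vs : List (ETree L)} (hus : us.Nodup) (hvs : vs.Nodup)
    {s : Finset L} (hs : s ⊆ labelSet (node us))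
    (h : Multiset.Rel Iso (us.filterMap (restrict · s) : Multiset (ETree L))
      (vs.filterMap (restrict · s))) :
    s.card ≤ mm us.toFinset vs.toFinset := by
  rw [← Multiset.filterMap_coe, ← Multiset.filterMap_coe, ← hus.dedup, ← hvs.dedup,
    ← List.toFinset_val, ← List.toFinset_val] at h
  obtain ⟨M, hM, hiso, hcov⟩ := exists_isMatching_of_rel h
  have hsub : s ⊆ M.biUnion fun p => s ∩ labelSet p.1 := fun x hx => by
    obtain ⟨c, hc, hxc⟩ := mem_labelSet_node.mp (hs hx)
    have hsome : restrict c s ≠ none := fun hnone =>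
      Finset.disjoint_left.mp (restrict_eq_none_iff.mp hnone) hxc hx
    obtain ⟨p, hp, rfl⟩ := hcov c (List.mem_toFinset.mpr hc) hsome
    exact Finset.mem_biUnion.mpr ⟨p, hp, Finset.mem_inter.mpr ⟨hx, hxc⟩⟩
  calc s.card ≤ ∑ p ∈ M, (s ∩ labelSet p.1).card :=
        (Finset.card_le_card hsub).trans Finset.card_biUnion_le
    _ ≤ ∑ p ∈ M, rr p.1 p.2 :=
        Finset.sum_le_sum fun p hp => card_inter_labelSet_le_rr (isoO_iff_rel.mpr (hiso p hp))
    _ ≤ mm us.toFinset vs.toFinset := le_mm hM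

theorem rr_node_le_max {us vs : List (ETree L)} (hus : us.Nodup) (hvs : vs.Nodup) :
    rr (node us) (node vs) ≤ max (mm us.toFinset vs.toFinset)
      (max (mm {node us} vs.toFinset) (mm us.toFinset {node vs})) := by
  refine rr_le fun s hs hiso => ?_
  have hsu := hs.trans Finset.inter_subset_left
  have hsv := hs.trans Finset.inter_subset_right
  by_cases h₁ : (us.filterMap (restrict · s)).length = 1
  · obtain ⟨c, hc, hsc, hres⟩ := exists_restrict_node_eq_of_length_eq_one hsu h₁
    calc s.card ≤ rr c (node vs) := le_rr (Finset.subset_inter hsc hsv) (hres ▸ hiso)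
      _ ≤ mm us.toFinset {node vs} :=
          rr_le_mm (List.mem_toFinset.mpr hc) (Finset.mem_singleton_self _)
      _ ≤ _ := le_max_of_le_right (le_max_right _ _)
  by_cases h₂ : (vs.filterMap (restrict · s)).length = 1
  · obtain ⟨d, hd, hsd, hres⟩ := exists_restrict_node_eq_of_length_eq_one hsv h₂
    calc s.card ≤ rr (node us) d := le_rr (Finset.subset_inter hsu hsd) (hres ▸ hiso)
      _ ≤ mm {node us} vs.toFinset :=
          rr_le_mm (Finset.mem_singleton_self _) (List.mem_toFinset.mpr hd)
      _ ≤ _ := le_max_of_le_right (le_max_left _ _)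
  rw [restrict_node, restrict_node] at hiso
  exact (card_le_mm_of_rel hus hvs hsu (rel_of_isoO_ofForest h₁ h₂ hiso)).trans (le_max_left _ _)

theorem rr_le_rr_node_left {us : List (ETree L)} (hnd : us.Nodup)
    (hdisj : {t | t ∈ us}.PairwiseDisjoint labelSet) {c : ETree L} (hc : c ∈ us) (t : ETree L) :
    rr c t ≤ rr (node us) t :=
  rr_le fun s hs hiso => le_rr (hs.trans (Finset.inter_subset_inter_right
    (labelSet_subset_node hc))) <| by
      rwa [restrict_node_eq_of_subset hnd hdisj hc (hs.trans Finset.inter_subset_left)]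

theorem rr_le_rr_node_right {vs : List (ETree L)} (hnd : vs.Nodup)
    (hdisj : {t | t ∈ vs}.PairwiseDisjoint labelSet) {d : ETree L} (hd : d ∈ vs) (t : ETree L) :
    rr t d ≤ rr t (node vs) :=
  rr_le fun s hs hiso => le_rr (hs.trans (Finset.inter_subset_inter_left
    (labelSet_subset_node hd))) <| by
      rwa [restrict_node_eq_of_subset hnd hdisj hd (hs.trans Finset.inter_subset_right)]

theorem sum_rr_le_rr_node {us vs : List (ETree L)} (hus : us.Nodup) (hvs : vs.Nodup)
    (hU : {t | t ∈ us}.PairwiseDisjoint labelSet) (hV : {t | t ∈ vs}.PairwiseDisjoint labelSet)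
    {M : Finset (ETree L × ETree L)} (hM : IsMatching us.toFinset vs.toFinset M) :
    ∑ p ∈ M, rr p.1 p.2 ≤ rr (node us) (node vs) := by
  choose F hF hcard hiso using fun p : ETree L × ETree L => exists_rr_eq p.1 p.2
  have hmem₁ : ∀ p ∈ M, p.1 ∈ us := fun p hp => List.mem_toFinset.mp (hM.1 p hp).1
  have hmem₂ : ∀ p ∈ M, p.2 ∈ vs := fun p hp => List.mem_toFinset.mp (hM.1 p hp).2
  have hF₁ : ∀ p ∈ M, F p ⊆ labelSet p.1 := fun p _ => (hF p).trans Finset.inter_subset_left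
  have hF₂ : ∀ p ∈ M, F p ⊆ labelSet p.2 := fun p _ => (hF p).trans Finset.inter_subset_right
  set s := M.biUnion F
  have hrel : Multiset.Rel Iso (us.filterMap (restrict · s) : Multiset (ETree L))
      (vs.filterMap (restrict · s)) := by
    rw [List.coe_filterMap_eq_of_injOn hus hM.injOn_fst hmem₁
        fun c hc hcM => restrict_biUnion_eq_none hU hmem₁ hF₁ hc hcM,
      List.coe_filterMap_eq_of_injOn hvs hM.injOn_snd hmem₂
        fun d hd hdM => restrict_biUnion_eq_none hV hmem₂ hF₂ hd hdM]
    refine Multiset.rel_filterMap_of_forall fun p hp => ?_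
    rw [restrict_biUnion_of_mem hU hM.injOn_fst hmem₁ hF₁ hp,
      restrict_biUnion_of_mem hV hM.injOn_snd hmem₂ hF₂ hp]
    exact isoO_iff_rel.mp (hiso p)
  have hsub : s ⊆ labelSet (node us) ∩ labelSet (node vs) := Finset.biUnion_subset.mpr
    fun p hp => (hF p).trans (Finset.inter_subset_inter (labelSet_subset_node (hmem₁ p hp))
      (labelSet_subset_node (hmem₂ p hp)))
  calc ∑ p ∈ M, rr p.1 p.2 = s.card := by
        rw [Finset.card_biUnion fun p hp q hq hpq =>
          (hU (hmem₁ p hp) (hmem₁ q hq) (hM.2 p hp q hq hpq).1).mono (hF₁ p hp) (hF₁ q hq)]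
        exact Finset.sum_congr rfl fun p _ => (hcard p).symm
    _ ≤ rr (node us) (node vs) := by
        refine le_rr hsub ?_
        rw [restrict_node, restrict_node]
        exact isoO_ofForest_of_rel hrel

end ETree

open ETree in
/-- Let `S₁` and `S₂` be evolutionary trees, `u` an internal vertex of
`S₁` (with children list `us`) and `v` an internal vertex of `S₂` (with children list
`vs`).  Then `rr(S₁^u, S₂^v) = max { mm(K(u,S₁),K(v,S₂)), mm(u,K(v,S₂)), mm(K(u,S₁),v) }`. -/
theorem rr_eq_max_mm {L : Type} [DecidableEq L] (S₁ S₂ : ETree L)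
    (h₁ : IsEvolutionary S₁) (h₂ : IsEvolutionary S₂)
    (us vs : List (ETree L))
    (hu : IsSubtree (ETree.node us) S₁) (hv : IsSubtree (ETree.node vs) S₂) :
    rr (ETree.node us) (ETree.node vs) =
      max (mm us.toFinset vs.toFinset)
        (max (mm {ETree.node us} vs.toFinset) (mm us.toFinset {ETree.node vs})) := by
  have hU := h₁.of_isSubtree hu
  have hV := h₂.of_isSubtree hv
  refine le_antisymm (rr_node_le_max hU.nodup_children hV.nodup_children)
    (max_le ?_ (max_le ?_ ?_))
  · exact mm_le fun M hM => sum_rr_le_rr_node hU.nodup_children hV.nodup_children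
      hU.pairwiseDisjoint_children hV.pairwiseDisjoint_children hM
  · refine mm_le_of_card_le_one (fun M hM => hM.card_le_one_of_left) fun u hu d hd => ?_
    rw [Finset.mem_singleton.mp hu]
    exact rr_le_rr_node_right hV.nodup_children hV.pairwiseDisjoint_children
      (List.mem_toFinset.mp hd) _
  · refine mm_le_of_card_le_one (fun M hM => hM.card_le_one_of_right) fun c hc v hv => ?_
    rw [Finset.mem_singleton.mp hv]
    exact rr_le_rr_node_left hU.nodup_children hU.pairwiseDisjoint_children
      (List.mem_toFinset.mp hc) _
end

section
/- Let S1, S2, P' = x_1,…,x_{p'}, Q' = y_1,…,y_{q'} be as in the stated setting, and suppose S1 and S2 share exactly n leaf labels. Then the number of intersecting pairs (x_i, y_j) with i ∈ [1,p'] and j ∈ [1,q'] is at most n. Moreover, for distinct intersecting pairs (x_i,y_j) and (x_{i'},y_{j'}), the set of leaf labels shared by the subtrees {S1^u : u ∈ X_i} and {S2^v : v ∈ Y_j} is disjoint from the corresponding shared-label set for (x_{i'},y_{j'}). -/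
/-- A root path `x₁,…,x_len` of a tree: a vertex-simple path starting at the root and
descending, containing no leaf of the tree.  Vertices are identified with the subtrees
they root, so `vert i` is the subtree `S^{xᵢ}` rooted at the `i`-th vertex of the path
(indices run from `1` to `len`). -/
structure RootPath (L : Type) where
  /-- The ambient tree. -/
  tree : ETree L
  /-- The number of vertices of the path. -/
  len : ℕ
  /-- The subtree rooted at the `i`-th vertex of the path, for `1 ≤ i ≤ len`. -/
  vert : ℕ → ETree L
  len_pos : 1 ≤ len
  first : vert 1 = tree
  /-- The path contains no leaf of the tree. -/
  no_leaf : ∀ i, 1 ≤ i → i ≤ len → ∃ ts, vert i = ETree.node ts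
  /-- Each path vertex after the first is a child of the previous one. -/
  step : ∀ i, 1 ≤ i → i < len → vert (i + 1) ∈ (vert i).children

namespace RootPath

variable {L : Type} [DecidableEq L]

/-- `offPath P i` is the set of children of the path vertex `xᵢ` that are not on the
path (the set `Xᵢ`). -/
noncomputable def offPath (P : RootPath L) (i : ℕ) : Finset (ETree L) :=
  if i < P.len then ((P.vert i).children.toFinset).erase (P.vert (i + 1))
  else (P.vert i).children.toFinset

end RootPath

/-- `Intersecting P Q i j`: the pair `(xᵢ, y_j)` is intersecting, i.e. `S₁^u` and `S₂^v`
share a leaf label for some `u ∈ Xᵢ` and `v ∈ Y_j`. -/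
def Intersecting {L : Type} [DecidableEq L] (P Q : RootPath L) (i j : ℕ) : Prop :=
  ∃ u ∈ P.offPath i, ∃ v ∈ Q.offPath j,
    (ETree.labelSet u ∩ ETree.labelSet v).Nonempty

/-- The set of leaf labels shared by the subtrees `{S₁^u : u ∈ Xᵢ}` and
`{S₂^v : v ∈ Y_j}`. -/
noncomputable def sharedLabels {L : Type} [DecidableEq L] (P Q : RootPath L)
    (i j : ℕ) : Finset L :=
  (P.offPath i).biUnion fun u =>
    (Q.offPath j).biUnion fun v => ETree.labelSet u ∩ ETree.labelSet v

/-!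
The vertices of `Xᵢ` are siblings of `xᵢ₊₁`, whose subtree contains every subtree hanging off
the path further down. As leaf labels are distinct, the label sets `L₁(i)` below `Xᵢ` are
pairwise disjoint for distinct `i`, and likewise `L₂(j)` below `Y_j`. The shared-label set of
`(xᵢ, y_j)` is `L₁(i) ∩ L₂(j)`, so these sets are pairwise disjoint as well, and every
intersecting pair owns a nonempty one inside the `n` common labels.
-/

theorem Set.PairwiseDisjoint.prod_inf {ι κ α : Type*} [SemilatticeInf α] [OrderBot α]
    {s : Set ι} {t : Set κ} {f : ι → α} {g : κ → α}
    (hs : s.PairwiseDisjoint f) (ht : t.PairwiseDisjoint g) :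
    (s ×ˢ t).PairwiseDisjoint fun p => f p.1 ⊓ g p.2 := by
  rintro ⟨i, j⟩ ⟨hi, hj⟩ ⟨i', j'⟩ ⟨hi', hj'⟩ hne
  obtain rfl | hii' := eq_or_ne i i'
  · exact (ht hj hj' fun hjj' => hne (Prod.ext rfl hjj')).mono inf_le_right inf_le_right
  · exact (hs hi hi' hii').mono inf_le_left inf_le_left

namespace ETree

section

variable {L : Type}

theorem isSubtree_of_mem_children {u t : ETree L} (h : u ∈ t.children) : IsSubtree u t := by
  cases t with
  | leaf => simp [children] at h
  | node ts => exact .child h (.refl u)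

theorem IsSubtree.trans {s t r : ETree L} (hst : IsSubtree s t) (htr : IsSubtree t r) :
    IsSubtree s r := by
  induction htr with
  | refl => exact hst
  | child hc _ ih => exact .child hc ih

theorem IsSubtree.nodup_labelList {s t : ETree L} (h : IsSubtree s t)
    (ht : (labelList t).Nodup) : (labelList s).Nodup := by
  induction h with
  | refl => exact ht
  | child hc _ ih =>
    rw [labelList_node, List.nodup_flatMap] at ht
    exact ih (ht.1 _ hc)

end

variable {L : Type} [DecidableEq L]

theorem IsSubtree.labelSet_subset {s t : ETree L} (h : IsSubtree s t) :
    labelSet s ⊆ labelSet t := by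
  induction h with
  | refl => exact subset_rfl
  | child hc _ ih =>
    refine ih.trans fun x hx => ?_
    simp only [labelSet, labelList_node, List.mem_toFinset, List.mem_flatMap] at hx ⊢
    exact ⟨_, hc, hx⟩

theorem disjoint_labelSet_of_mem_children {t u v : ETree L} (ht : (labelList t).Nodup)
    (hu : u ∈ t.children) (hv : v ∈ t.children) (huv : u ≠ v) :
    Disjoint (labelSet u) (labelSet v) := by
  cases t with
  | leaf => simp [children] at hu
  | node ts =>
    rw [labelList_node, List.nodup_flatMap] at ht
    have : Std.Symm (Function.onFun List.Disjoint (labelList (L := L))) :=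
      ⟨fun _ _ h => h.symm⟩
    have hdisj : List.Disjoint (labelList u) (labelList v) := ht.2.forall hu hv huv
    exact Finset.disjoint_left.mpr fun x hxu hxv =>
      hdisj (List.mem_toFinset.mp hxu) (List.mem_toFinset.mp hxv)

end ETree

namespace RootPath

open ETree

section

variable {L : Type} (P : RootPath L)

theorem vert_isSubtree_vert {i k : ℕ} (hi : 1 ≤ i) (hik : i ≤ k) (hk : k ≤ P.len) :
    IsSubtree (P.vert k) (P.vert i) := by
  induction k, hik using Nat.le_induction with
  | base => exact .refl _
  | succ k hik ih =>
    exact (isSubtree_of_mem_children (P.step k (hi.trans hik) hk)).trans 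
      (ih (Nat.le_of_succ_le hk))

theorem mem_children_of_mem_offPath {i : ℕ} {u : ETree L} (hu : u ∈ P.offPath i) :
    u ∈ (P.vert i).children := by
  rw [offPath] at hu
  split_ifs at hu
  · exact List.mem_toFinset.mp (Finset.mem_of_mem_erase hu)
  · exact List.mem_toFinset.mp hu

end

variable {L : Type} [DecidableEq L] (P : RootPath L)

noncomputable def offPathLabels (i : ℕ) : Finset L :=
  (P.offPath i).biUnion labelSet

theorem offPathLabels_subset_labelSet_vert (i : ℕ) :
    P.offPathLabels i ⊆ labelSet (P.vert i) :=
  Finset.biUnion_subset.mpr fun _ hu =>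
    (isSubtree_of_mem_children (P.mem_children_of_mem_offPath hu)).labelSet_subset

theorem offPathLabels_subset_labelSet_tree {i : ℕ} (hi : 1 ≤ i) (hi' : i ≤ P.len) :
    P.offPathLabels i ⊆ labelSet P.tree :=
  (P.offPathLabels_subset_labelSet_vert i).trans
    (P.first ▸ P.vert_isSubtree_vert le_rfl hi hi').labelSet_subset

theorem disjoint_offPathLabels_of_lt (hnd : (labelList P.tree).Nodup) {i i' : ℕ}
    (hi : 1 ≤ i) (hii' : i < i') (hi' : i' ≤ P.len) :
    Disjoint (P.offPathLabels i) (P.offPathLabels i') := by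
  have hlt : i < P.len := hii'.trans_le hi'
  have hnd_i : (labelList (P.vert i)).Nodup :=
    (P.first ▸ P.vert_isSubtree_vert le_rfl hi hlt.le).nodup_labelList hnd
  have hbelow : P.offPathLabels i' ⊆ labelSet (P.vert (i + 1)) :=
    (P.offPathLabels_subset_labelSet_vert i').trans
      (P.vert_isSubtree_vert (by omega) hii' hi').labelSet_subset
  refine (Finset.disjoint_biUnion_left _ _ _).mpr fun u hu => Disjoint.mono_right hbelow ?_
  rw [offPath, if_pos hlt, Finset.mem_erase, List.mem_toFinset] at hu
  exact disjoint_labelSet_of_mem_children hnd_i hu.2 (P.step i hi hlt) hu.1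

theorem pairwiseDisjoint_offPathLabels (hnd : (labelList P.tree).Nodup) :
    (↑(Finset.Icc 1 P.len) : Set ℕ).PairwiseDisjoint P.offPathLabels := by
  intro i hi i' hi' hne
  simp only [Finset.coe_Icc, Set.mem_Icc] at hi hi'
  rcases hne.lt_or_gt with h | h
  · exact P.disjoint_offPathLabels_of_lt hnd hi.1 h hi'.2
  · exact (P.disjoint_offPathLabels_of_lt hnd hi'.1 h hi.2).symm

end RootPath

section SharedLabels

variable {L : Type} [DecidableEq L] (P Q : RootPath L)

theorem sharedLabels_eq_inter (i j : ℕ) :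
    sharedLabels P Q i j = P.offPathLabels i ∩ Q.offPathLabels j := by
  ext x
  simp only [sharedLabels, RootPath.offPathLabels, Finset.mem_biUnion, Finset.mem_inter]
  constructor
  · rintro ⟨u, hu, v, hv, hxu, hxv⟩
    exact ⟨⟨u, hu, hxu⟩, v, hv, hxv⟩
  · rintro ⟨⟨u, hu, hxu⟩, v, hv, hxv⟩
    exact ⟨u, hu, v, hv, hxu, hxv⟩

theorem intersecting_iff_nonempty_sharedLabels (i j : ℕ) :
    Intersecting P Q i j ↔ (sharedLabels P Q i j).Nonempty := by
  simp only [Intersecting, sharedLabels, Finset.biUnion_nonempty]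

theorem pairwiseDisjoint_sharedLabels (hP : (ETree.labelList P.tree).Nodup)
    (hQ : (ETree.labelList Q.tree).Nodup) :
    (↑(Finset.Icc 1 P.len ×ˢ Finset.Icc 1 Q.len) : Set (ℕ × ℕ)).PairwiseDisjoint
      fun p => sharedLabels P Q p.1 p.2 := by
  simp_rw [Finset.coe_product, sharedLabels_eq_inter]
  exact (P.pairwiseDisjoint_offPathLabels hP).prod_inf (Q.pairwiseDisjoint_offPathLabels hQ)

theorem disjoint_sharedLabels (hP : (ETree.labelList P.tree).Nodup)
    (hQ : (ETree.labelList Q.tree).Nodup) {i j i' j' : ℕ} (hi : i ∈ Finset.Icc 1 P.len)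
    (hj : j ∈ Finset.Icc 1 Q.len) (hi' : i' ∈ Finset.Icc 1 P.len)
    (hj' : j' ∈ Finset.Icc 1 Q.len) (hne : (i, j) ≠ (i', j')) :
    Disjoint (sharedLabels P Q i j) (sharedLabels P Q i' j') := by
  -- `(e :)` elaborates `e` without the goal; unifying against it first times out.
  exact (pairwiseDisjoint_sharedLabels P Q hP hQ
    (Finset.mem_coe.mpr (Finset.mk_mem_product hi hj))
    (Finset.mem_coe.mpr (Finset.mk_mem_product hi' hj')) hne :)

theorem sharedLabels_subset {i j : ℕ} (hi : i ∈ Finset.Icc 1 P.len)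
    (hj : j ∈ Finset.Icc 1 Q.len) :
    sharedLabels P Q i j ⊆ ETree.labelSet P.tree ∩ ETree.labelSet Q.tree := by
  rw [Finset.mem_Icc] at hi hj
  rw [sharedLabels_eq_inter]
  exact Finset.inter_subset_inter (P.offPathLabels_subset_labelSet_tree hi.1 hi.2)
    (Q.offPathLabels_subset_labelSet_tree hj.1 hj.2)

end SharedLabels

open scoped Classical in
open ETree in
theorem card_intersecting_le_general {L : Type} [DecidableEq L] (P Q : RootPath L)
    (hS₁ : ETree.IsEvolutionary P.tree) (hS₂ : ETree.IsEvolutionary Q.tree)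
    (n : ℕ) (hn : (ETree.labelSet P.tree ∩ ETree.labelSet Q.tree).card = n) :
    (((Finset.Icc 1 P.len) ×ˢ (Finset.Icc 1 Q.len)).filter
        (fun p => Intersecting P Q p.1 p.2)).card ≤ n ∧
    (∀ i j i' j', i ∈ Finset.Icc 1 P.len → j ∈ Finset.Icc 1 Q.len →
      i' ∈ Finset.Icc 1 P.len → j' ∈ Finset.Icc 1 Q.len →
      Intersecting P Q i j → Intersecting P Q i' j' → (i, j) ≠ (i', j') →
      Disjoint (sharedLabels P Q i j) (sharedLabels P Q i' j')) := by
  refine ⟨?_, fun i j i' j' hi hj hi' hj' _ _ hne =>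
    disjoint_sharedLabels P Q hS₁.2 hS₂.2 hi hj hi' hj' hne⟩
  set T := ((Finset.Icc 1 P.len) ×ˢ (Finset.Icc 1 Q.len)).filter
    fun p => Intersecting P Q p.1 p.2
  have hdisj : (T : Set (ℕ × ℕ)).PairwiseDisjoint fun p => sharedLabels P Q p.1 p.2 :=
    (pairwiseDisjoint_sharedLabels P Q hS₁.2 hS₂.2).subset (Finset.coe_subset.mpr
      (Finset.filter_subset _ _))
  calc T.card ≤ (T.biUnion fun p => sharedLabels P Q p.1 p.2).card :=
        Finset.card_le_card_biUnion hdisj fun p hp =>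
          (intersecting_iff_nonempty_sharedLabels P Q _ _).mp (Finset.mem_filter.mp hp).2
    _ ≤ (ETree.labelSet P.tree ∩ ETree.labelSet Q.tree).card :=
        Finset.card_le_card <| Finset.biUnion_subset.mpr fun p hp =>
          have hp' := Finset.mem_product.mp (Finset.mem_filter.mp hp).1
          sharedLabels_subset P Q hp'.1 hp'.2
    _ = n := hn

open scoped Classical in
open ETree in
/-- In the root-path setting, if `S₁` and `S₂` share exactly `n` leaf
labels, then the number of intersecting pairs `(xᵢ, y_j)` with `i ∈ [1,p']`, `j ∈ [1,q']`
is at most `n`; moreover, for distinct intersecting pairs the corresponding shared-label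
sets are disjoint. -/
theorem card_intersecting_le {L : Type} [DecidableEq L] (P Q : RootPath L)
    (hS₁ : ETree.IsEvolutionary P.tree) (hS₂ : ETree.IsEvolutionary Q.tree)
    (hlab : ETree.labelSet P.tree = ETree.labelSet Q.tree)
    (n : ℕ) (hn : (ETree.labelSet P.tree ∩ ETree.labelSet Q.tree).card = n) :
    (((Finset.Icc 1 P.len) ×ˢ (Finset.Icc 1 Q.len)).filter
        (fun p => Intersecting P Q p.1 p.2)).card ≤ n ∧
    (∀ i j i' j', i ∈ Finset.Icc 1 P.len → j ∈ Finset.Icc 1 Q.len →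
      i' ∈ Finset.Icc 1 P.len → j' ∈ Finset.Icc 1 Q.len →
      Intersecting P Q i j → Intersecting P Q i' j' → (i, j) ≠ (i', j') →
      Disjoint (sharedLabels P Q i j) (sharedLabels P Q i' j')) :=
  card_intersecting_le_general P Q hS₁ hS₂ n hn
end

section
/- If two finite sets H1 and H2 each regularly partition the same regular integer interval [i1,i2], then their union H1 ∪ H2 also regularly partitions [i1,i2]. -/
/-- Regular integer intervals `[k₁, k₂]`:
`[1, 2^α]` is regular for every `α ≥ 0`, and the upper half `[k₁, (k₁+k₂−1)/2]`
and lower half `[(k₁+k₂+1)/2, k₂]` of every even-length regular interval are regular. -/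
inductive Regular : ℕ → ℕ → Prop where
  | base (α : ℕ) : Regular 1 (2 ^ α)
  | upper {k₁ k₂ : ℕ} (h : Regular k₁ k₂) (heven : Even (k₂ - k₁ + 1)) :
      Regular k₁ ((k₁ + k₂ - 1) / 2)
  | lower {k₁ k₂ : ℕ} (h : Regular k₁ k₂) (heven : Even (k₂ - k₁ + 1)) :
      Regular ((k₁ + k₂ + 1) / 2) k₂

/-- A set `H = {h₁ < h₂ < ⋯ < h_k}` regularly partitions a regular interval `[i₁,i₂]` if
`h₁ = i₁` and the intervals `[h₁,h₂−1], …, [h_{k−1},h_k−1], [h_k,i₂]` are all regular.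
(For consecutive members `h < h'` of `H`, the interval `[h, h'−1]` is regular, and for
the largest member `h`, the interval `[h, i₂]` is regular.) -/
def RegularlyPartitions (H : Set ℕ) (i₁ i₂ : ℕ) : Prop :=
  i₁ ∈ H ∧ (∀ h ∈ H, i₁ ≤ h ∧ h ≤ i₂) ∧
  (∀ h ∈ H, ∀ h' ∈ H, h < h' → (∀ h'' ∈ H, h'' ≤ h ∨ h' ≤ h'') → Regular h (h' - 1)) ∧
  (∀ h ∈ H, (∀ h'' ∈ H, h'' ≤ h) → Regular h i₂)

/-!
Regular intervals are exactly the dyadic intervals `[m * 2^β + 1, (m + 1) * 2^β]`, so two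
regular intervals that meet are nested. If `h < e` are consecutive points of `H₁ ∪ H₂` with
`h ∈ H₁` and `e ∈ H₂`, then the block of `H₁` starting at `h` reaches at least to `e - 1`, and
the block of `H₂` ending at `e - 1` starts at or before `h`; since these two regular intervals
are nested, one of them is exactly `[h, e - 1]`.
-/

theorem Regular.exists_eq_dyadic {a b : ℕ} (h : Regular a b) :
    ∃ β m : ℕ, a = m * 2 ^ β + 1 ∧ b = (m + 1) * 2 ^ β := by
  have exists_succ {β m : ℕ} (heven : Even ((m + 1) * 2 ^ β - (m * 2 ^ β + 1) + 1)) :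
      ∃ γ, β = γ + 1 := by
    have hlen : (m + 1) * 2 ^ β - (m * 2 ^ β + 1) + 1 = 2 ^ β := by
      have := Nat.one_le_two_pow (n := β)
      rw [add_one_mul]; omega
    rw [hlen, Nat.even_pow] at heven
    exact Nat.exists_eq_add_one.mpr (Nat.pos_of_ne_zero heven.2)
  induction h with
  | base α => exact ⟨α, 0, by ring, by ring⟩
  | upper _ heven ih =>
    obtain ⟨β, m, rfl, rfl⟩ := ih
    obtain ⟨γ, rfl⟩ := exists_succ heven
    refine ⟨γ, 2 * m, by ring, ?_⟩
    have : m * 2 ^ (γ + 1) + 1 + (m + 1) * 2 ^ (γ + 1) - 1 = 2 * ((2 * m + 1) * 2 ^ γ) := by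
      rw [Nat.add_right_comm, Nat.add_sub_cancel]; ring
    rw [this, Nat.mul_div_cancel_left _ two_pos]
  | lower _ heven ih =>
    obtain ⟨β, m, rfl, rfl⟩ := ih
    obtain ⟨γ, rfl⟩ := exists_succ heven
    refine ⟨γ, 2 * m + 1, ?_, by ring⟩
    have : m * 2 ^ (γ + 1) + 1 + (m + 1) * 2 ^ (γ + 1) + 1 = 2 * ((2 * m + 1) * 2 ^ γ + 1) := by
      ring
    rw [this, Nat.mul_div_cancel_left _ two_pos]

theorem Regular.le {a b : ℕ} (h : Regular a b) : a ≤ b := by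
  obtain ⟨β, m, rfl, rfl⟩ := h.exists_eq_dyadic
  have := Nat.one_le_two_pow (n := β)
  rw [add_one_mul]; omega

theorem dyadic_nested {β γ m n : ℕ} (hβγ : β ≤ γ)
    (h₁ : m * 2 ^ β + 1 ≤ (n + 1) * 2 ^ γ) (h₂ : n * 2 ^ γ + 1 ≤ (m + 1) * 2 ^ β) :
    n * 2 ^ γ ≤ m * 2 ^ β ∧ (m + 1) * 2 ^ β ≤ (n + 1) * 2 ^ γ := by
  obtain ⟨k, hk⟩ := pow_dvd_pow 2 hβγ
  have hn₁ : (n + 1) * 2 ^ γ = (n + 1) * k * 2 ^ β := by rw [hk]; ring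
  have hn₀ : n * 2 ^ γ = n * k * 2 ^ β := by rw [hk]; ring
  simp only [hn₁, hn₀] at h₁ h₂ ⊢
  have hm : m < (n + 1) * k := lt_of_mul_lt_mul_right h₁ (Nat.zero_le _)
  have hn : n * k < m + 1 := lt_of_mul_lt_mul_right h₂ (Nat.zero_le _)
  exact ⟨Nat.mul_le_mul_right _ (by omega), Nat.mul_le_mul_right _ hm⟩

theorem Regular.nested_of_overlap {a b c d : ℕ} (hab : Regular a b) (hcd : Regular c d)
    (had : a ≤ d) (hcb : c ≤ b) : (a ≤ c ∧ d ≤ b) ∨ (c ≤ a ∧ b ≤ d) := by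
  obtain ⟨β, m, rfl, rfl⟩ := hab.exists_eq_dyadic
  obtain ⟨γ, n, rfl, rfl⟩ := hcd.exists_eq_dyadic
  rcases le_total β γ with hβγ | hγβ
  · have := dyadic_nested hβγ had hcb
    right; omega
  · have := dyadic_nested hγβ hcb had
    left; omega

namespace RegularlyPartitions

variable {H H₁ H₂ : Set ℕ} {i₁ i₂ h e : ℕ}

theorem exists_regular_from (hH : RegularlyPartitions H i₁ i₂) (hh : h ∈ H) :
    ∃ b, Regular h b ∧ (b = i₂ ∨ b + 1 ∈ H) := by
  classical
  by_cases hup : ∃ g ∈ H, h < g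
  · obtain ⟨he, hhe⟩ := Nat.find_spec hup
    have hmin : ∀ g ∈ H, g ≤ h ∨ Nat.find hup ≤ g := fun g hg =>
      (le_or_gt g h).imp_right fun hhg => Nat.find_min' hup ⟨hg, hhg⟩
    refine ⟨Nat.find hup - 1, hH.2.2.1 h hh _ he hhe hmin, Or.inr ?_⟩
    rwa [Nat.sub_add_cancel (by omega)]
  · push Not at hup
    exact ⟨i₂, hH.2.2.2 h hh hup, Or.inl rfl⟩

theorem exists_regular_to (hH : RegularlyPartitions H i₁ i₂) (he : e ∈ H) (hh : i₁ ≤ h)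
    (hhe : h < e) (hgap : ∀ g ∈ H, g ≤ h ∨ e ≤ g) : ∃ a ≤ h, Regular a (e - 1) := by
  classical
  refine ⟨Nat.findGreatest (· ∈ H) h, Nat.findGreatest_le h, ?_⟩
  refine hH.2.2.1 _ (Nat.findGreatest_spec hh hH.1) e he ((Nat.findGreatest_le h).trans_lt hhe) ?_
  exact fun g hg => (hgap g hg).imp_left fun hgh => Nat.le_findGreatest hgh hg

theorem regular_of_consecutive_union (h₁ : RegularlyPartitions H₁ i₁ i₂)
    (h₂ : RegularlyPartitions H₂ i₁ i₂) (hh : h ∈ H₁) (he : e ∈ H₁ ∪ H₂) (hhe : h < e)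
    (hgap : ∀ g ∈ H₁ ∪ H₂, g ≤ h ∨ e ≤ g) : Regular h (e - 1) := by
  rcases he with he | he
  · exact h₁.2.2.1 h hh e he hhe fun g hg => hgap g (Or.inl hg)
  obtain ⟨b, hhb, hb⟩ := h₁.exists_regular_from hh
  have heb : e - 1 ≤ b := by
    rcases hb with rfl | hb
    · have := (h₂.2.1 e he).2; omega
    · have := hgap (b + 1) (Or.inl hb); have := hhb.le; omega
  obtain ⟨a, hah, hae⟩ :=
    h₂.exists_regular_to he (h₁.2.1 h hh).1 hhe fun g hg => hgap g (Or.inr hg)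
  rcases hhb.nested_of_overlap hae (by omega) (by omega) with ⟨hha, -⟩ | ⟨-, hbe⟩
  · rwa [le_antisymm hah hha] at hae
  · rwa [show b = e - 1 by omega] at hhb

theorem union (h₁ : RegularlyPartitions H₁ i₁ i₂) (h₂ : RegularlyPartitions H₂ i₁ i₂) :
    RegularlyPartitions (H₁ ∪ H₂) i₁ i₂ := by
  refine ⟨Or.inl h₁.1, ?_, ?_, ?_⟩
  · rintro g (hg | hg)
    exacts [h₁.2.1 g hg, h₂.2.1 g hg]
  · rintro h (hh | hh) e he hhe hgap
    · exact regular_of_consecutive_union h₁ h₂ hh he hhe hgap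
    · exact regular_of_consecutive_union h₂ h₁ hh (Or.symm he) hhe fun g hg => hgap g (Or.symm hg)
  · rintro h (hh | hh) htop
    exacts [h₁.2.2.2 h hh fun g hg => htop g (Or.inl hg),
      h₂.2.2.2 h hh fun g hg => htop g (Or.inr hg)]

end RegularlyPartitions

theorem regularlyPartitions_union_general (H₁ H₂ : Finset ℕ) (i₁ i₂ : ℕ)
    (h₁ : RegularlyPartitions (↑H₁) i₁ i₂) (h₂ : RegularlyPartitions (↑H₂) i₁ i₂) :
    RegularlyPartitions (↑(H₁ ∪ H₂)) i₁ i₂ := by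
  rw [Finset.coe_union]
  exact h₁.union h₂

/-- If two finite sets `H₁` and `H₂` each regularly partition the same
regular integer interval `[i₁,i₂]`, then their union `H₁ ∪ H₂` also regularly
partitions `[i₁,i₂]`. -/
theorem regularlyPartitions_union (H₁ H₂ : Finset ℕ) (i₁ i₂ : ℕ)
    (hreg : Regular i₁ i₂)
    (h₁ : RegularlyPartitions (↑H₁) i₁ i₂) (h₂ : RegularlyPartitions (↑H₂) i₁ i₂) :
    RegularlyPartitions (↑(H₁ ∪ H₂)) i₁ i₂ :=
  regularlyPartitions_union_general H₁ H₂ i₁ i₂ h₁ h₂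
end
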